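/- arXiv:1401.4614 — 2 statements merged into one kernel-verified Lean document; each statement's English description precedes it below -/
import Mathlib

section
/- Let L_1,L_2 be functions regularly varying at infinity with indices β_1,β_2∈ℝ respectively, and let Z_1,Z_2 be independent real random variables with P(e^{Z_i}>u) ~ L_i(u)Ψ(log u) as u→∞ for i=1,2, and let σ_1,σ_2>0. Then for every a>0, P(e^{σ_1Z_1+σ_2Z_2}>u, e^{σ_2Z_2}≤a) / P(e^{σ_1Z_1+σ_2Z_2}>u, e^{σ_2Z_2}>a) → 0 as u→∞, and likewise P(e^{σ_1Z_1+σ_2Z_2}>u, e^{σ_1Z_1}≤a) / P(e^{σ_1Z_1+σ_2Z_2}>u, e^{σ_1Z_1}>a) → 0 as u→∞. -/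
open MeasureTheory ProbabilityTheory Filter Real Set

/-- Survival function of the standard normal distribution: `Ψ x = P(Z > x)` for `Z ~ N(0,1)`. -/
noncomputable def stdGaussianSurvival (x : ℝ) : ℝ :=
  ((gaussianReal 0 1) (Set.Ioi x)).toReal

/-- `L` is regularly varying at infinity with index `β`. -/
def RegVary (L : ℝ → ℝ) (β : ℝ) : Prop :=
  ∀ l : ℝ, 0 < l → Tendsto (fun u => L (l * u) / L u) atTop (nhds (l ^ β))

/-- Asymptotic equivalence at infinity: `f u / g u → 1` as `u → ∞`. -/
def AsymEquiv (f g : ℝ → ℝ) : Prop :=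
  Tendsto (fun u => f u / g u) atTop (nhds 1)

/-!
After taking logarithms, with `S = σ₁ Z₁` and `T = σ₂ Z₂` one compares `P(S + T > t, T ≤ a)`
with `P(S + T > t, T > a)`. The first event forces `S > t - a`; the second contains
`{S > t - a - δ} ∩ {T > a + δ}`, whose probability factors by independence. So it suffices that
`P(S > t + δ) / P(S > t) → 0`, and this holds because the tail of `S` is a regularly varying
function times a Gaussian tail, while `Ψ(x + δ) / Ψ(x) ≤ e^{-xδ}`.
-/

open Asymptotics Topology

lemma stdGaussianSurvival_eq_integral (x : ℝ) :
    stdGaussianSurvival x = ∫ t in Ioi x, gaussianPDFReal 0 1 t := by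
  rw [stdGaussianSurvival, gaussianReal_apply_eq_integral 0 one_ne_zero,
    ENNReal.toReal_ofReal
      (setIntegral_nonneg measurableSet_Ioi fun t _ => gaussianPDFReal_nonneg 0 1 t)]

lemma stdGaussianSurvival_pos (x : ℝ) : 0 < stdGaussianSurvival x := by
  rw [stdGaussianSurvival_eq_integral, setIntegral_pos_iff_support_of_nonneg_ae
    (ae_of_all _ fun t => gaussianPDFReal_nonneg 0 1 t)
    (integrable_gaussianPDFReal 0 1).integrableOn]
  have hsupp : Function.support (gaussianPDFReal 0 1) = univ := by
    ext t; simp [(gaussianPDFReal_pos 0 1 t one_ne_zero).ne']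
  simp [hsupp, Real.volume_Ioi]

lemma stdGaussianSurvival_add_le {x δ : ℝ} (hδ : 0 ≤ δ) :
    stdGaussianSurvival (x + δ) ≤ exp (-(x * δ)) * stdGaussianSurvival x := by
  have hshift : stdGaussianSurvival (x + δ) = ∫ t in Ioi x, gaussianPDFReal 0 1 (t + δ) := by
    rw [stdGaussianSurvival_eq_integral, ← (measurePreserving_add_right volume δ)
      |>.setIntegral_preimage_emb (measurableEmbedding_addRight δ)]
    congr 1
    ext t
    simp
  rw [hshift, stdGaussianSurvival_eq_integral, ← integral_const_mul]
  refine setIntegral_mono_on ((integrable_gaussianPDFReal 0 1).comp_add_right δ).integrableOn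
    ((integrable_gaussianPDFReal 0 1).integrableOn.const_mul _) measurableSet_Ioi fun t ht => ?_
  simp only [gaussianPDFReal, NNReal.coe_one, mul_one, sub_zero]
  rw [mul_left_comm, ← Real.exp_add]
  gcongr
  nlinarith [mem_Ioi.mp ht]

lemma tendsto_stdGaussianSurvival_add_div {δ : ℝ} (hδ : 0 < δ) :
    Tendsto (fun x => stdGaussianSurvival (x + δ) / stdGaussianSurvival x) atTop (𝓝 0) := by
  have hexp : Tendsto (fun x => exp (-(x * δ))) atTop (𝓝 0) :=
    tendsto_exp_atBot.comp (tendsto_neg_atTop_atBot.comp (tendsto_id.atTop_mul_const hδ))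
  refine squeeze_zero (fun x =>
    div_nonneg (stdGaussianSurvival_pos _).le (stdGaussianSurvival_pos _).le) (fun x => ?_) hexp
  rw [div_le_iff₀ (stdGaussianSurvival_pos x)]
  exact stdGaussianSurvival_add_le hδ.le

section Tails

variable {Ω : Type*} [MeasurableSpace Ω] {P : Measure Ω}

noncomputable def upperTail (P : Measure Ω) (X : Ω → ℝ) (t : ℝ) : ℝ :=
  (P {ω | t < X ω}).toReal

lemma upperTail_const_mul {σ : ℝ} (hσ : 0 < σ) (X : Ω → ℝ) (t : ℝ) :
    upperTail P (fun ω => σ * X ω) t = upperTail P X (t / σ) := by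
  simp only [upperTail, div_lt_iff₀' hσ]

lemma upperTail_antitone [IsFiniteMeasure P] (X : Ω → ℝ) : Antitone (upperTail P X) :=
  fun _ _ hst => ENNReal.toReal_mono (measure_ne_top P _)
    (measure_mono fun _ hω => lt_of_le_of_lt hst hω)

lemma upperTail_exp (X : Ω → ℝ) (t : ℝ) :
    (P {ω | exp t < exp (X ω)}).toReal = upperTail P X t := by
  simp only [upperTail, exp_lt_exp]

lemma upperTail_pos_of_asymEquiv [IsFiniteMeasure P] {L : ℝ → ℝ} {X : Ω → ℝ}
    (hX : AsymEquiv (fun u => (P {ω | u < exp (X ω)}).toReal)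
      (fun u => L u * stdGaussianSurvival (log u))) (t : ℝ) :
    0 < upperTail P X t := by
  have hne : ∀ᶠ s in atTop, upperTail P X s ≠ 0 := by
    filter_upwards [(hX.comp tendsto_exp_atTop).eventually_ne one_ne_zero] with s hs hzero
    simp only [upperTail] at hzero
    simp [hzero] at hs
  obtain ⟨s, hs, hts⟩ := (hne.and (eventually_ge_atTop t)).exists
  exact (ENNReal.toReal_nonneg.lt_of_ne' hs).trans_le (upperTail_antitone X hts)

lemma tendsto_upperTail_add_div_of_asymEquiv {L : ℝ → ℝ} {β δ : ℝ} {X : Ω → ℝ}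
    (hLpos : ∀ u > (0 : ℝ), 0 < L u) (hL : RegVary L β)
    (hX : AsymEquiv (fun u => (P {ω | u < exp (X ω)}).toReal)
      (fun u => L u * stdGaussianSurvival (log u))) (hδ : 0 < δ) :
    Tendsto (fun t => upperTail P X (t + δ) / upperTail P X t) atTop (𝓝 0) := by
  have hequiv : upperTail P X ~[atTop] fun t => L (exp t) * stdGaussianSurvival t := by
    refine isEquivalent_of_tendsto_one ((hX.comp tendsto_exp_atTop).congr fun t => ?_)
    simp [upperTail]
  have hshift := hequiv.comp_tendsto (tendsto_atTop_add_const_right _ δ tendsto_id)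
  refine (hshift.div hequiv).symm.tendsto_nhds ?_
  have hlim := ((hL (exp δ) (exp_pos δ)).comp tendsto_exp_atTop).mul
    (tendsto_stdGaussianSurvival_add_div hδ)
  rw [mul_zero] at hlim
  refine hlim.congr fun t => ?_
  have := (hLpos _ (exp_pos t)).ne'
  have := (stdGaussianSurvival_pos t).ne'
  simp only [Function.comp_apply, Pi.div_apply, id, ← exp_add, add_comm δ t]
  field_simp

lemma tendsto_measure_sum_gt_and_le_div_and_gt [IsFiniteMeasure P] {S T : Ω → ℝ}
    (hST : IndepFun S T P) {δ : ℝ} (hδ : 0 ≤ δ)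
    (hS : Tendsto (fun t => upperTail P S (t + δ) / upperTail P S t) atTop (𝓝 0))
    (hSpos : ∀ t, 0 < upperTail P S t) (a : ℝ) (hT : 0 < upperTail P T (a + δ)) :
    Tendsto (fun t => (P {ω | t < S ω + T ω ∧ T ω ≤ a}).toReal /
      (P {ω | t < S ω + T ω ∧ a < T ω}).toReal) atTop (𝓝 0) := by
  have hnum : ∀ t, (P {ω | t < S ω + T ω ∧ T ω ≤ a}).toReal ≤ upperTail P S (t - a) :=
    fun t => ENNReal.toReal_mono (measure_ne_top P _)
      (measure_mono fun ω ⟨hsum, hle⟩ => show t - a < S ω by linarith)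
  have hden : ∀ t, upperTail P S (t - a - δ) * upperTail P T (a + δ) ≤
      (P {ω | t < S ω + T ω ∧ a < T ω}).toReal := by
    intro t
    change (P (S ⁻¹' Ioi _)).toReal * (P (T ⁻¹' Ioi _)).toReal ≤ _
    rw [← ENNReal.toReal_mul,
      ← hST.measure_inter_preimage_eq_mul _ _ measurableSet_Ioi measurableSet_Ioi]
    refine ENNReal.toReal_mono (measure_ne_top P _) (measure_mono fun ω ⟨hSω, hTω⟩ => ?_)
    simp only [mem_preimage, mem_Ioi] at hSω hTω
    exact ⟨by linarith, by linarith⟩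
  have hbound := ((hS.comp (tendsto_atTop_add_const_right _ (-a - δ) tendsto_id)).div_const
    (upperTail P T (a + δ)))
  rw [zero_div] at hbound
  refine squeeze_zero (fun t => div_nonneg ENNReal.toReal_nonneg ENNReal.toReal_nonneg)
    (fun t => ?_) hbound
  calc _ ≤ upperTail P S (t - a) / (upperTail P S (t - a - δ) * upperTail P T (a + δ)) :=
        div_le_div₀ (hSpos _).le (hnum t) (mul_pos (hSpos _) hT) (hden t)
    _ = _ := by simp only [Function.comp_apply, id, div_div]; ring_nf

lemma tendsto_measure_exp_gt_and_factor_le_div_factor_gt [IsFiniteMeasure P] {L : ℝ → ℝ}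
    {β : ℝ} (hLpos : ∀ u > (0 : ℝ), 0 < L u) (hL : RegVary L β) {X Y : Ω → ℝ}
    (hX : AsymEquiv (fun u => (P {ω | u < exp (X ω)}).toReal)
      (fun u => L u * stdGaussianSurvival (log u)))
    (hYpos : ∀ t, 0 < upperTail P Y t) (hXY : IndepFun X Y P) {σ τ : ℝ} (hσ : 0 < σ)
    (hτ : 0 < τ) {a : ℝ} (ha : 0 < a) :
    Tendsto (fun u =>
      (P {ω | u < exp (σ * X ω + τ * Y ω) ∧ exp (τ * Y ω) ≤ a}).toReal /
      (P {ω | u < exp (σ * X ω + τ * Y ω) ∧ a < exp (τ * Y ω)}).toReal) atTop (𝓝 0) := by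
  have hshift : Tendsto (fun t => upperTail P (fun ω => σ * X ω) (t + σ) /
      upperTail P (fun ω => σ * X ω) t) atTop (𝓝 0) := by
    refine ((tendsto_upperTail_add_div_of_asymEquiv hLpos hL hX one_pos).comp
      (tendsto_id.atTop_div_const hσ)).congr fun t => ?_
    simp only [Function.comp_apply, id, upperTail_const_mul hσ, add_div, div_self hσ.ne']
  have hlog := (tendsto_measure_sum_gt_and_le_div_and_gt
    (hXY.comp (measurable_const_mul σ) (measurable_const_mul τ)) hσ.le hshift
    (fun t => upperTail_const_mul hσ X t ▸ upperTail_pos_of_asymEquiv hX _) (log a)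
    (upperTail_const_mul hτ Y _ ▸ hYpos _)).comp tendsto_log_atTop
  refine hlog.congr' ?_
  filter_upwards [eventually_gt_atTop 0] with u hu
  simp only [Function.comp_apply, log_lt_iff_lt_exp hu, le_log_iff_exp_le ha,
    log_lt_iff_lt_exp ha]

end Tails

theorem product_lognormal_small_factor_negligible_general
    {Ω : Type*} [MeasurableSpace Ω] (P : Measure Ω) [IsProbabilityMeasure P]
    (L₁ L₂ : ℝ → ℝ) (β₁ β₂ : ℝ)
    (hL₁pos : ∀ u > (0 : ℝ), 0 < L₁ u) (hL₂pos : ∀ u > (0 : ℝ), 0 < L₂ u)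
    (hL₁ : RegVary L₁ β₁) (hL₂ : RegVary L₂ β₂)
    (Z₁ Z₂ : Ω → ℝ)
    (hindep : IndepFun Z₁ Z₂ P)
    (hZ₁ : AsymEquiv (fun u => (P {ω | u < exp (Z₁ ω)}).toReal)
      (fun u => L₁ u * stdGaussianSurvival (log u)))
    (hZ₂ : AsymEquiv (fun u => (P {ω | u < exp (Z₂ ω)}).toReal)
      (fun u => L₂ u * stdGaussianSurvival (log u)))
    (σ₁ σ₂ : ℝ) (hσ₁ : 0 < σ₁) (hσ₂ : 0 < σ₂) :
    ∀ a > (0 : ℝ),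
      Tendsto (fun u =>
        (P {ω | u < exp (σ₁ * Z₁ ω + σ₂ * Z₂ ω) ∧ exp (σ₂ * Z₂ ω) ≤ a}).toReal /
        (P {ω | u < exp (σ₁ * Z₁ ω + σ₂ * Z₂ ω) ∧ a < exp (σ₂ * Z₂ ω)}).toReal)
        atTop (nhds 0) ∧
      Tendsto (fun u =>
        (P {ω | u < exp (σ₁ * Z₁ ω + σ₂ * Z₂ ω) ∧ exp (σ₁ * Z₁ ω) ≤ a}).toReal /
        (P {ω | u < exp (σ₁ * Z₁ ω + σ₂ * Z₂ ω) ∧ a < exp (σ₁ * Z₁ ω)}).toReal)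
        atTop (nhds 0) := by
  intro a ha
  refine ⟨tendsto_measure_exp_gt_and_factor_le_div_factor_gt hL₁pos hL₁ hZ₁
    (upperTail_pos_of_asymEquiv hZ₂) hindep hσ₁ hσ₂ ha, ?_⟩
  simpa only [add_comm (σ₂ * Z₂ _)] using tendsto_measure_exp_gt_and_factor_le_div_factor_gt
    hL₂pos hL₂ hZ₂ (upperTail_pos_of_asymEquiv hZ₁) hindep.symm hσ₂ hσ₁ ha

/-- Equation (12) and its companion: the contribution where one factor stays bounded
is negligible. -/
theorem product_lognormal_small_factor_negligible
    {Ω : Type*} [MeasurableSpace Ω] (P : Measure Ω) [IsProbabilityMeasure P]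
    (L₁ L₂ : ℝ → ℝ) (β₁ β₂ : ℝ)
    (hL₁pos : ∀ u > (0 : ℝ), 0 < L₁ u) (hL₂pos : ∀ u > (0 : ℝ), 0 < L₂ u)
    (hL₁ : RegVary L₁ β₁) (hL₂ : RegVary L₂ β₂)
    (Z₁ Z₂ : Ω → ℝ) (hZ₁meas : Measurable Z₁) (hZ₂meas : Measurable Z₂)
    (hindep : IndepFun Z₁ Z₂ P)
    (hZ₁ : AsymEquiv (fun u => (P {ω | u < exp (Z₁ ω)}).toReal)
      (fun u => L₁ u * stdGaussianSurvival (log u)))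
    (hZ₂ : AsymEquiv (fun u => (P {ω | u < exp (Z₂ ω)}).toReal)
      (fun u => L₂ u * stdGaussianSurvival (log u)))
    (σ₁ σ₂ : ℝ) (hσ₁ : 0 < σ₁) (hσ₂ : 0 < σ₂) :
    ∀ a > (0 : ℝ),
      Tendsto (fun u =>
        (P {ω | u < exp (σ₁ * Z₁ ω + σ₂ * Z₂ ω) ∧ exp (σ₂ * Z₂ ω) ≤ a}).toReal /
        (P {ω | u < exp (σ₁ * Z₁ ω + σ₂ * Z₂ ω) ∧ a < exp (σ₂ * Z₂ ω)}).toReal)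
        atTop (nhds 0) ∧
      Tendsto (fun u =>
        (P {ω | u < exp (σ₁ * Z₁ ω + σ₂ * Z₂ ω) ∧ exp (σ₁ * Z₁ ω) ≤ a}).toReal /
        (P {ω | u < exp (σ₁ * Z₁ ω + σ₂ * Z₂ ω) ∧ a < exp (σ₁ * Z₁ ω)}).toReal)
        atTop (nhds 0) :=
  product_lognormal_small_factor_negligible_general P L₁ L₂ β₁ β₂ hL₁pos hL₂pos hL₁ hL₂ Z₁ Z₂ hindep
    hZ₁ hZ₂ σ₁ σ₂ hσ₁ hσ₂
end

section
/- Let δ>0 and let N be a nonnegative integer-valued random variable with E[(1+δ)^N]<∞ and P(N≥1)>0. Let ρ∈[0,1) and let Z_0,Z_1,Z_2,… be independent real random variables, independent of N, such that P(e^{Z_0}>u) ~ L(u)Ψ(log u) as u→∞ for some function L regularly varying at infinity with index β∈ℝ, and such that there exist constants c_i∈[0,∞) with sup_{i≥1}c_i<∞ and sup_{i≥1}|P(Z_i>u)/P(Z_0>u)−c_i|→0 as u→∞, and assume Θ:=E[Σ_{i=1}^N c_i]∈(0,∞). Then the random maximum W_N^*=max_{1≤i≤N} e^{√(1−ρ²)·Z_i}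 (equal to 0 when N=0) satisfies P(W_N^*>u) ~ Θ·P(e^{√(1−ρ²)·Z_0}>u) as u→∞. -/
open MeasureTheory ProbabilityTheory Filter Real Set

/-!
Conditioning on `N` and using independence, with `t = log u / √(1 - ρ²)` and `qᵢ(t) = P(Zᵢ > t)`,
`P(W_N^* > u) = ∑ₙ P(N = n) (1 - ∏_{i ≤ n} (1 - qᵢ(t)))`. Since `S - S² ≤ 1 - ∏ (1 - qᵢ) ≤ S` for
`S = ∑_{i ≤ n} qᵢ` and `qᵢ / q₀ → cᵢ` while `q₀ → 0`, the `n`-th term divided by `q₀(t)` tends to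
`P(N = n) ∑_{i ≤ n} cᵢ`; the uniform bound `qᵢ / q₀ ≤ M + 1` dominates it by `(M + 1) n P(N = n)`,
which is summable because `N` has an exponential moment, so the series converges to `Θ`.
-/

open Topology

section ProductOneSub

variable {ι : Type*} {p : ι → ℝ}

theorem one_sub_sum_le_prod_one_sub (s : Finset ι) (h0 : ∀ i ∈ s, 0 ≤ p i)
    (h1 : ∀ i ∈ s, p i ≤ 1) : 1 - ∑ i ∈ s, p i ≤ ∏ i ∈ s, (1 - p i) := by
  classical
  induction s using Finset.induction with
  | empty => simp
  | insert a s ha ih =>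
    rw [Finset.sum_insert ha, Finset.prod_insert ha]
    have hS : 0 ≤ ∑ i ∈ s, p i := Finset.sum_nonneg fun i hi => h0 i (by simp [hi])
    have ih := ih (fun i hi => h0 i (by simp [hi])) (fun i hi => h1 i (by simp [hi]))
    nlinarith [h0 a (by simp), h1 a (by simp)]

theorem prod_one_sub_le_one_sub_sum_add_sq (s : Finset ι) (h0 : ∀ i ∈ s, 0 ≤ p i)
    (h1 : ∀ i ∈ s, p i ≤ 1) :
    ∏ i ∈ s, (1 - p i) ≤ 1 - ∑ i ∈ s, p i + (∑ i ∈ s, p i) ^ 2 := by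
  classical
  induction s using Finset.induction with
  | empty => simp
  | insert a s ha ih =>
    rw [Finset.sum_insert ha, Finset.prod_insert ha]
    have hS : 0 ≤ ∑ i ∈ s, p i := Finset.sum_nonneg fun i hi => h0 i (by simp [hi])
    have ih := ih (fun i hi => h0 i (by simp [hi])) (fun i hi => h1 i (by simp [hi]))
    nlinarith [h0 a (by simp), h1 a (by simp)]

end ProductOneSub

theorem tendsto_one_sub_prod_one_sub_div {α ι : Type*} {l : Filter α} {s : Finset ι}
    {p : ι → α → ℝ} {r : α → ℝ} {c : ι → ℝ} (hp0 : ∀ i t, 0 ≤ p i t) (hp1 : ∀ i t, p i t ≤ 1)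
    (hr : Tendsto r l (𝓝[>] 0)) (hpr : ∀ i ∈ s, Tendsto (fun t => p i t / r t) l (𝓝 (c i))) :
    Tendsto (fun t => (1 - ∏ i ∈ s, (1 - p i t)) / r t) l (𝓝 (∑ i ∈ s, c i)) := by
  have hS : Tendsto (fun t => (∑ i ∈ s, p i t) / r t) l (𝓝 (∑ i ∈ s, c i)) := by
    simpa only [Finset.sum_div] using tendsto_finsetSum s hpr
  -- `1 - ∏ (1 - pᵢ)` lies between `S - S²` and `S`, and `S² / r = (S / r)² r → 0`.
  have hlower : Tendsto (fun t => (∑ i ∈ s, p i t) / r t - ((∑ i ∈ s, p i t) / r t) ^ 2 * r t) l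
      (𝓝 (∑ i ∈ s, c i)) := by
    simpa using hS.sub ((hS.pow 2).mul (tendsto_nhdsWithin_iff.1 hr).1)
  refine tendsto_of_tendsto_of_tendsto_of_le_of_le' hlower hS ?_ ?_ <;>
    filter_upwards [(tendsto_nhdsWithin_iff.1 hr).2] with t (ht : 0 < r t)
  · rw [div_pow, sq (r t), div_mul_eq_mul_div, mul_div_mul_right _ _ ht.ne', div_sub_div_same]
    refine (div_le_div_iff_of_pos_right ht).2 ?_
    linarith [prod_one_sub_le_one_sub_sum_add_sq s (fun i _ => hp0 i t) (fun i _ => hp1 i t)]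
  · refine (div_le_div_iff_of_pos_right ht).2 ?_
    linarith [one_sub_sum_le_prod_one_sub s (fun i _ => hp0 i t) (fun i _ => hp1 i t)]

theorem tendsto_tsum_one_sub_prod_one_sub_div {α : Type*} {l : Filter α} {w : ℕ → ℝ}
    (hw : ∀ n, 0 ≤ w n) (hwn : Summable fun n => w n * n) {q : ℕ → α → ℝ} {r : α → ℝ}
    {c : ℕ → ℝ} (M : ℝ) (hq0 : ∀ i t, 0 ≤ q i t) (hq1 : ∀ i t, q i t ≤ 1)
    (hr : Tendsto r l (𝓝[>] 0))
    (hqr : ∀ i, 1 ≤ i → Tendsto (fun t => q i t / r t) l (𝓝 (c i)))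
    (hqM : ∀ᶠ t in l, ∀ i, 1 ≤ i → q i t / r t ≤ M) :
    Tendsto (fun t => (∑' n, w n * (1 - ∏ i ∈ Finset.Icc 1 n, (1 - q i t))) / r t) l
      (𝓝 (∑' n, w n * ∑ i ∈ Finset.Icc 1 n, c i)) := by
  simp only [← tsum_div_const, mul_div_assoc]
  refine tendsto_tsum_of_dominated_convergence (bound := fun n => w n * n * M)
    (hwn.mul_right M) (fun n => ?_) ?_
  · exact (tendsto_one_sub_prod_one_sub_div hq0 hq1 hr
      fun i hi => hqr i (Finset.mem_Icc.1 hi).1).const_mul (w n)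
  · filter_upwards [hqM, (tendsto_nhdsWithin_iff.1 hr).2] with t hM (ht : 0 < r t) n
    have hA0 : 0 ≤ 1 - ∏ i ∈ Finset.Icc 1 n, (1 - q i t) := by
      have := Finset.prod_le_one (s := Finset.Icc 1 n) (fun i _ => sub_nonneg.2 (hq1 i t))
        (fun i _ => by linarith [hq0 i t])
      linarith
    have hAS : (1 - ∏ i ∈ Finset.Icc 1 n, (1 - q i t)) / r t ≤ n * M := calc
      _ ≤ (∑ i ∈ Finset.Icc 1 n, q i t) / r t := by
        refine (div_le_div_iff_of_pos_right ht).2 ?_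
        linarith [one_sub_sum_le_prod_one_sub (Finset.Icc 1 n) (fun i _ => hq0 i t)
          (fun i _ => hq1 i t)]
      _ ≤ ∑ i ∈ Finset.Icc 1 n, M := by
        rw [Finset.sum_div]
        exact Finset.sum_le_sum fun i hi => hM i (Finset.mem_Icc.1 hi).1
      _ = n * M := by simp
    rw [Real.norm_of_nonneg (mul_nonneg (hw n) (div_nonneg hA0 ht.le)), mul_assoc]
    exact mul_le_mul_of_nonneg_left hAS (hw n)

theorem Real.lt_biSup_finset_iff {ι : Type*} {s : Finset ι} {f : ι → ℝ} {u : ℝ} (hu : 0 ≤ u) :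
    u < ⨆ i ∈ s, f i ↔ ∃ i ∈ s, u < f i := by
  have hbdd : BddAbove (range fun i => ⨆ _ : i ∈ s, f i) :=
    ⟨∑ i ∈ s, |f i|, forall_mem_range.2 fun i => Real.iSup_le
      (fun hi => (le_abs_self _).trans (Finset.single_le_sum (fun j _ => abs_nonneg (f j)) hi))
      (Finset.sum_nonneg fun j _ => abs_nonneg (f j))⟩
  constructor
  · intro h
    by_contra! hle
    -- empty suprema are `0` in `ℝ`, whence `0 ≤ u`
    exact h.not_ge (Real.iSup_le (fun i => Real.iSup_le (hle i) hu) hu)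
  · rintro ⟨i, his, hi⟩
    exact hi.trans_le ((ciSup_pos his).symm.le.trans (le_ciSup hbdd i))

theorem lt_exp_mul_iff {u a x : ℝ} (hu : 0 < u) (ha : 0 < a) : u < exp (a * x) ↔ log u / a < x := by
  rw [← log_lt_iff_lt_exp hu, div_lt_iff₀ ha, mul_comm]

section Probability

variable {Ω : Type*} [MeasurableSpace Ω] {P : Measure Ω}

theorem hasSum_measureReal_mul_of_integrable {N : Ω → ℕ} (hN : Measurable N) {g : ℕ → ℝ}
    (hg : Integrable (fun ω => g (N ω)) P) :
    HasSum (fun n => P.real {ω | N ω = n} * g n) (∫ ω, g (N ω) ∂P) := by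
  have hmeas : ∀ n, MeasurableSet {ω | N ω = n} := fun n => hN (measurableSet_singleton n)
  have hunion : (⋃ n, {ω | N ω = n}) = univ := iUnion_eq_univ_iff.2 fun ω => ⟨N ω, rfl⟩
  have h := hasSum_integral_iUnion hmeas (fun m n hmn => disjoint_left.2 fun ω hm hn =>
    hmn (hm.symm.trans hn)) (by rw [hunion]; exact hg.integrableOn)
  rw [hunion, setIntegral_univ] at h
  refine h.congr_fun fun n => ?_
  rw [setIntegral_congr_fun (hmeas n) fun ω (hω : N ω = n) => by rw [hω], setIntegral_const,
    smul_eq_mul]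

theorem tendsto_measureReal_lt_atTop [IsFiniteMeasure P] {X : Ω → ℝ} (hX : Measurable X) :
    Tendsto (fun t => P.real {ω | t < X ω}) atTop (𝓝 0) := by
  have h := tendsto_measure_iInter_atTop (μ := P) (s := fun t : ℝ => {ω | t < X ω})
    (fun t => (measurableSet_lt measurable_const hX).nullMeasurableSet)
    (fun s t hst ω h => lt_of_le_of_lt hst h) ⟨0, measure_ne_top P _⟩
  have hempty : (⋂ t : ℝ, {ω | t < X ω}) = ∅ :=
    iInter_eq_empty_iff.2 fun ω => ⟨X ω, by simp⟩
  rw [hempty, measure_empty] at h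
  exact (ENNReal.tendsto_toReal ENNReal.zero_ne_top).comp h

theorem measureReal_exists_lt_of_iIndepFun [IsProbabilityMeasure P] {ι : Type*}
    {Z : ι → Ω → ℝ} (hZm : ∀ i, Measurable (Z i)) (hZ : iIndepFun Z P) (s : Finset ι) (t : ℝ) :
    P.real {ω | ∃ i ∈ s, t < Z i ω} = 1 - ∏ i ∈ s, (1 - P.real {ω | t < Z i ω}) := by
  have hcompl : {ω | ∃ i ∈ s, t < Z i ω}ᶜ = ⋂ i ∈ s, Z i ⁻¹' Iic t := by
    ext ω
    simp
  have hmeas : MeasurableSet (⋂ i ∈ s, Z i ⁻¹' Iic t) :=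
    Finset.measurableSet_biInter s fun i _ => hZm i measurableSet_Iic
  rw [← compl_compl {ω | ∃ i ∈ s, t < Z i ω}, hcompl, probReal_compl_eq_one_sub hmeas,
    measureReal_def, hZ.measure_inter_preimage_eq_mul s (fun i _ => measurableSet_Iic),
    ENNReal.toReal_prod]
  congr 2 with i
  have hi : {ω | t < Z i ω} = (Z i ⁻¹' Iic t)ᶜ := by
    ext ω
    simp
  rw [hi, probReal_compl_eq_one_sub (hZm i measurableSet_Iic), sub_sub_cancel, measureReal_def]

theorem measureReal_mem_of_indepFun [IsFiniteMeasure P] {β : Type*} [MeasurableSpace β]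
    {N : Ω → ℕ} {Y : Ω → β} (hN : Measurable N) (hY : Measurable Y) (hNY : IndepFun N Y P)
    {T : ℕ → Set β} (hT : ∀ n, MeasurableSet (T n)) :
    P.real {ω | Y ω ∈ T (N ω)} = ∑' n, P.real {ω | N ω = n} * P.real (Y ⁻¹' T n) := by
  have hunion : {ω | Y ω ∈ T (N ω)} = ⋃ n, {ω | N ω = n} ∩ Y ⁻¹' T n := by
    ext ω
    simp
  have hterm : ∀ n, P ({ω | N ω = n} ∩ Y ⁻¹' T n) = P {ω | N ω = n} * P (Y ⁻¹' T n) :=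
    fun n => hNY.measure_inter_preimage_eq_mul _ _ (measurableSet_singleton n) (hT n)
  have hdisj : Pairwise (Function.onFun Disjoint fun n => {ω | N ω = n} ∩ Y ⁻¹' T n) :=
    fun m n hmn => disjoint_left.2 fun ω hm hn => hmn (hm.1.symm.trans hn.1)
  have hmeas : ∀ n, MeasurableSet ({ω | N ω = n} ∩ Y ⁻¹' T n) :=
    fun n => (hN (measurableSet_singleton n)).inter (hY (hT n))
  rw [measureReal_def, hunion, measure_iUnion hdisj hmeas,
    ENNReal.tsum_toReal_eq fun n => measure_ne_top P _]
  simp only [hterm, ENNReal.toReal_mul, measureReal_def]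

theorem measureReal_exists_Icc_lt_of_indepFun [IsProbabilityMeasure P] {N : Ω → ℕ}
    {Z : ℕ → Ω → ℝ} (hN : Measurable N) (hZm : ∀ i, Measurable (Z i)) (hZ : iIndepFun Z P)
    (hNZ : IndepFun N (fun ω i => Z i ω) P) (t : ℝ) :
    P.real {ω | ∃ i ∈ Finset.Icc 1 (N ω), t < Z i ω} =
      ∑' n, P.real {ω | N ω = n} * (1 - ∏ i ∈ Finset.Icc 1 n, (1 - P.real {ω | t < Z i ω})) := by
  have hT : ∀ n, MeasurableSet {f : ℕ → ℝ | ∃ i ∈ Finset.Icc 1 n, t < f i} := fun n => by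
    have h : {f : ℕ → ℝ | ∃ i ∈ Finset.Icc 1 n, t < f i} = ⋃ i ∈ Finset.Icc 1 n, {f | t < f i} := by
      ext f
      simp
    rw [h]
    exact Finset.measurableSet_biUnion _ fun i _ => measurable_pi_apply i measurableSet_Ioi
  refine (measureReal_mem_of_indepFun hN (measurable_pi_lambda _ hZm) hNZ hT).trans ?_
  congr with n
  rw [← measureReal_exists_lt_of_iIndepFun hZm hZ]
  rfl

theorem summable_measureReal_eq_mul_of_integrable_pow {N : Ω → ℕ} (hN : Measurable N) {δ : ℝ}
    (hδ : 0 < δ) (hNint : Integrable (fun ω => (1 + δ) ^ (N ω)) P) :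
    Summable fun n => P.real {ω | N ω = n} * n := by
  have hN' : Integrable (fun ω => (N ω : ℝ)) P := (hNint.div_const δ).mono'
    (measurable_from_top.comp hN).aestronglyMeasurable (ae_of_all _ fun ω => by
      rw [Real.norm_natCast, le_div_iff₀ hδ]
      linarith [one_add_mul_le_pow (by linarith : (-2 : ℝ) ≤ δ) (N ω)])
  exact (hasSum_measureReal_mul_of_integrable hN hN').summable

theorem eventually_measureReal_lt_pos_of_asymEquiv {X : Ω → ℝ} {g : ℝ → ℝ}
    (hX : AsymEquiv (fun u => P.real {ω | u < exp (X ω)}) g) :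
    ∀ᶠ t in atTop, 0 < P.real {ω | t < X ω} := by
  filter_upwards [tendsto_exp_atTop.eventually (hX.eventually_ne one_ne_zero)] with t ht
  have hpos := measureReal_nonneg.lt_of_ne' (div_ne_zero_iff.1 ht).1
  simpa only [exp_lt_exp] using hpos

theorem measureReal_lt_biSup_exp_mul [IsProbabilityMeasure P] {N : Ω → ℕ} {Z : ℕ → Ω → ℝ}
    (hN : Measurable N) (hZm : ∀ i, Measurable (Z i)) (hZ : iIndepFun Z P)
    (hNZ : IndepFun N (fun ω i => Z i ω) P) {u a : ℝ} (hu : 0 < u) (ha : 0 < a) :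
    P.real {ω | u < ⨆ i ∈ Finset.Icc 1 (N ω), exp (a * Z i ω)} =
      ∑' n, P.real {ω | N ω = n} *
        (1 - ∏ i ∈ Finset.Icc 1 n, (1 - P.real {ω | log u / a < Z i ω})) := by
  simp only [Real.lt_biSup_finset_iff hu.le, lt_exp_mul_iff hu ha]
  exact measureReal_exists_Icc_lt_of_indepFun hN hZm hZ hNZ _

end Probability

theorem random_max_independent_part_tail_general
    {Ω : Type*} [MeasurableSpace Ω] (P : Measure Ω) [IsProbabilityMeasure P]
    (δ : ℝ) (hδ : 0 < δ)
    (N : Ω → ℕ) (hNmeas : Measurable N)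
    (hNint : Integrable (fun ω => (1 + δ) ^ (N ω)) P)
    (ρ : ℝ) (hρ : ρ ∈ Set.Ico (0 : ℝ) 1)
    (Z : ℕ → Ω → ℝ) (hZmeas : ∀ i, Measurable (Z i))
    (hZindep : iIndepFun Z P)
    (hNZ : IndepFun N (fun ω => fun i => Z i ω) P)
    (L : ℝ → ℝ)
    (hZ0 : AsymEquiv (fun u => (P {ω | u < exp (Z 0 ω)}).toReal)
      (fun u => L u * stdGaussianSurvival (log u)))
    (c : ℕ → ℝ)
    (M : ℝ) (hcM : ∀ i, 1 ≤ i → c i ≤ M)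
    (hcu : ∀ ε > (0 : ℝ), ∀ᶠ u in atTop, ∀ i, 1 ≤ i →
      |(P {ω | u < Z i ω}).toReal / (P {ω | u < Z 0 ω}).toReal - c i| < ε)
    (Θ : ℝ) (hΘint : Integrable (fun ω => ∑ i ∈ Finset.Icc 1 (N ω), c i) P)
    (hΘ : Θ = ∫ ω, ∑ i ∈ Finset.Icc 1 (N ω), c i ∂P)
    (hΘpos : 0 < Θ) :
    AsymEquiv
      (fun u => (P {ω | u < ⨆ i ∈ Finset.Icc 1 (N ω),
          exp (sqrt (1 - ρ ^ 2) * Z i ω)}).toReal)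
      (fun u => Θ * (P {ω | u < exp (sqrt (1 - ρ ^ 2) * Z 0 ω)}).toReal) := by
  simp only [← measureReal_def] at hZ0 hcu ⊢
  set a := sqrt (1 - ρ ^ 2)
  have ha : 0 < a := sqrt_pos.2 (by nlinarith [hρ.1, hρ.2])
  set q : ℕ → ℝ → ℝ := fun i t => P.real {ω | t < Z i ω}
  have hq0 : Tendsto (q 0) atTop (𝓝[>] 0) := tendsto_nhdsWithin_iff.2
    ⟨tendsto_measureReal_lt_atTop (hZmeas 0), eventually_measureReal_lt_pos_of_asymEquiv hZ0⟩
  have hlim := tendsto_tsum_one_sub_prod_one_sub_div (fun n => measureReal_nonneg)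
    (summable_measureReal_eq_mul_of_integrable_pow hNmeas hδ hNint) (q := q) (M + 1)
    (fun i t => measureReal_nonneg) (fun i t => measureReal_le_one) hq0
    (fun i hi => Metric.tendsto_nhds.2 fun ε hε => (hcu ε hε).mono fun t ht => ht i hi)
    ((hcu 1 one_pos).mono fun t ht i hi => by linarith [(abs_lt.1 (ht i hi)).2, hcM i hi])
  rw [(hasSum_measureReal_mul_of_integrable hNmeas hΘint).tsum_eq, ← hΘ] at hlim
  rw [AsymEquiv, ← div_self hΘpos.ne']
  refine ((hlim.comp (tendsto_log_atTop.atTop_div_const ha)).div_const Θ).congr' ?_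
  filter_upwards [eventually_gt_atTop 0] with u hu
  simp only [Function.comp_apply, div_div, mul_comm Θ, q, lt_exp_mul_iff hu ha,
    measureReal_lt_biSup_exp_mul hNmeas hZmeas hZindep hNZ hu ha]

/-- Step in the proof of Theorem 1: the random maximum `W_N^* = max_{1≤i≤N} e^{√(1-ρ²) Z_i}`
of the independent parts satisfies `P(W_N^* > u) ~ Θ P(e^{√(1-ρ²) Z₀} > u)`. -/
theorem random_max_independent_part_tail
    {Ω : Type*} [MeasurableSpace Ω] (P : Measure Ω) [IsProbabilityMeasure P]
    (δ : ℝ) (hδ : 0 < δ)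
    (N : Ω → ℕ) (hNmeas : Measurable N)
    (hNint : Integrable (fun ω => (1 + δ) ^ (N ω)) P)
    (hNpos : 0 < P {ω | 1 ≤ N ω})
    (ρ : ℝ) (hρ : ρ ∈ Set.Ico (0 : ℝ) 1)
    (Z : ℕ → Ω → ℝ) (hZmeas : ∀ i, Measurable (Z i))
    (hZindep : iIndepFun Z P)
    (hNZ : IndepFun N (fun ω => fun i => Z i ω) P)
    (L : ℝ → ℝ) (β : ℝ) (hLpos : ∀ u > (0 : ℝ), 0 < L u) (hL : RegVary L β)
    (hZ0 : AsymEquiv (fun u => (P {ω | u < exp (Z 0 ω)}).toReal)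
      (fun u => L u * stdGaussianSurvival (log u)))
    (c : ℕ → ℝ) (hc0 : ∀ i, 1 ≤ i → 0 ≤ c i)
    (M : ℝ) (hcM : ∀ i, 1 ≤ i → c i ≤ M)
    (hcu : ∀ ε > (0 : ℝ), ∀ᶠ u in atTop, ∀ i, 1 ≤ i →
      |(P {ω | u < Z i ω}).toReal / (P {ω | u < Z 0 ω}).toReal - c i| < ε)
    (Θ : ℝ) (hΘint : Integrable (fun ω => ∑ i ∈ Finset.Icc 1 (N ω), c i) P)
    (hΘ : Θ = ∫ ω, ∑ i ∈ Finset.Icc 1 (N ω), c i ∂P)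
    (hΘpos : 0 < Θ) :
    AsymEquiv
      (fun u => (P {ω | u < ⨆ i ∈ Finset.Icc 1 (N ω),
          exp (sqrt (1 - ρ ^ 2) * Z i ω)}).toReal)
      (fun u => Θ * (P {ω | u < exp (sqrt (1 - ρ ^ 2) * Z 0 ω)}).toReal) :=
  random_max_independent_part_tail_general P δ hδ N hNmeas hNint ρ hρ Z hZmeas hZindep hNZ L hZ0 c M
    hcM hcu Θ hΘint hΘ hΘpos
end
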